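/- arXiv:2408.00810 — 3 statements merged into one kernel-verified Lean document; each statement's English description precedes it below -/
import Mathlib

section
/- Let p be a prime, d a positive natural number, and γ ≥ 0 a real number. If τ_1, …, τ_n is a collection of p-adic γ-equiangular lines in ℚ_p^d and |n| ≥ γ², then |n| ≤ |d|, where |n| and |d| denote the p-adic absolute values of the integers n and d. -/
open scoped BigOperators

noncomputable section

variable {p : ℕ} [Fact p.Prime]

/-- The bilinear form `⟨x, y⟩ = ∑ i, x i * y i` on `ℚ_p^d`. -/
def pinner {d : ℕ} (x y : Fin d → ℚ_[p]) : ℚ_[p] := ∑ i, x i * y i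

/-- `⟨·, y⟩` as a linear map. -/
def pinnerL {d : ℕ} (y : Fin d → ℚ_[p]) : (Fin d → ℚ_[p]) →ₗ[ℚ_[p]] ℚ_[p] where
  toFun x := pinner x y
  map_add' x z := by simp [pinner, add_mul, Finset.sum_add_distrib]
  map_smul' c x := by simp [pinner, Finset.mul_sum, mul_assoc]

/-- The frame operator `S_τ x = ∑ j, ⟨x, τ j⟩ • τ j`. -/
def frameOp {d n : ℕ} (τ : Fin n → Fin d → ℚ_[p]) :
    (Fin d → ℚ_[p]) →ₗ[ℚ_[p]] (Fin d → ℚ_[p]) :=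
  ∑ j, (pinnerL (τ j)).smulRight (τ j)

/-- `S_τ` is similar (through an invertible operator) to a diagonal operator with
eigenvalues `λ_1, …, λ_d` satisfying `|∑ λ_j|² ≤ |d| |∑ λ_j²|`. -/
def GoodDiagonalizable {d n : ℕ} (τ : Fin n → Fin d → ℚ_[p]) : Prop :=
  ∃ (P : (Fin d → ℚ_[p]) ≃ₗ[ℚ_[p]] (Fin d → ℚ_[p])) (lam : Fin d → ℚ_[p]),
    frameOp τ = P.toLinearMap ∘ₗ Matrix.toLin' (Matrix.diagonal lam) ∘ₗ P.symm.toLinearMap ∧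
    ‖∑ j, lam j‖ ^ 2 ≤ ‖(d : ℚ_[p])‖ * ‖∑ j, lam j ^ 2‖

/-- p-adic `γ`-equiangular lines. -/
def IsPadicEquiangular {d n : ℕ} (γ : ℝ) (τ : Fin n → Fin d → ℚ_[p]) : Prop :=
  (∀ j, pinner (τ j) (τ j) = 1) ∧
  (∀ j k, j ≠ k → ‖pinner (τ j) (τ k)‖ = γ) ∧
  GoodDiagonalizable τ

/-- p-adic `(γ, a)`-equiangular lines. -/
def IsPadicEquiangularA {d n : ℕ} (γ : ℝ) (a : ℚ_[p]) (τ : Fin n → Fin d → ℚ_[p]) : Prop :=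
  (∀ j, pinner (τ j) (τ j) = a) ∧
  (∀ j k, j ≠ k → ‖pinner (τ j) (τ k)‖ = γ) ∧
  GoodDiagonalizable τ


open Matrix in
lemma pv_trace_toLin' {d : ℕ} (M : Matrix (Fin d) (Fin d) ℚ_[p]) :
    LinearMap.trace ℚ_[p] _ (Matrix.toLin' M) = Matrix.trace M := by
  rw [LinearMap.trace_eq_matrix_trace ℚ_[p] (Pi.basisFun ℚ_[p] (Fin d)),
    LinearMap.toMatrix_eq_toMatrix', LinearMap.toMatrix'_toLin']

open Matrix in
lemma pv_frameOp_eq_toLin' {d n : ℕ} (τ : Fin n → Fin d → ℚ_[p]) :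
    frameOp τ = Matrix.toLin' ((Matrix.of fun j i => τ j i)ᵀ * (Matrix.of fun j i => τ j i)) := by
  apply LinearMap.ext; intro x
  funext i
  simp [frameOp, pinnerL, pinner, Matrix.toLin'_apply, Matrix.mulVec, dotProduct,
    Matrix.mul_apply, Finset.sum_mul, Finset.mul_sum]
  refine Finset.sum_congr rfl fun j _ => ?_
  refine Finset.sum_congr rfl fun k _ => ?_
  ring

open Matrix in
lemma pv_trace_frameOp {d n : ℕ} (τ : Fin n → Fin d → ℚ_[p]) :
    LinearMap.trace ℚ_[p] _ (frameOp τ) = ∑ j, pinner (τ j) (τ j) := by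
  rw [pv_frameOp_eq_toLin', pv_trace_toLin', Matrix.trace_mul_comm]
  simp [Matrix.trace, Matrix.diag, Matrix.mul_apply, pinner]

open Matrix in
lemma pv_trace_frameOp_sq {d n : ℕ} (τ : Fin n → Fin d → ℚ_[p]) :
    LinearMap.trace ℚ_[p] _ (frameOp τ ∘ₗ frameOp τ)
      = ∑ j, ∑ k, pinner (τ j) (τ k) * pinner (τ j) (τ k) := by
  set A : Matrix (Fin n) (Fin d) ℚ_[p] := Matrix.of fun j i => τ j i with hA
  rw [pv_frameOp_eq_toLin', ← Matrix.toLin'_mul, pv_trace_toLin']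
  have h1 : Aᵀ * A * (Aᵀ * A) = Aᵀ * (A * Aᵀ * A) := by
    rw [Matrix.mul_assoc, Matrix.mul_assoc]
  rw [h1, Matrix.trace_mul_comm, Matrix.mul_assoc]
  simp only [Matrix.trace, Matrix.diag, Matrix.mul_apply]
  refine Finset.sum_congr rfl fun j _ => ?_
  refine Finset.sum_congr rfl fun k _ => ?_
  simp only [pinner, Finset.sum_mul, Finset.mul_sum, A]
  rw [Finset.sum_comm]
  refine Finset.sum_congr rfl fun a _ => ?_
  refine Finset.sum_congr rfl fun b _ => ?_
  simp [Matrix.of_apply, Matrix.transpose_apply]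
  ring


theorem padic_vanLintSeidel_case_large {d n : ℕ} (hd : 0 < d)
    (γ : ℝ) (hγ : 0 ≤ γ) (τ : Fin n → Fin d → ℚ_[p])
    (h : IsPadicEquiangular γ τ) (hn : γ ^ 2 ≤ ‖(n : ℚ_[p])‖) :
    ‖(n : ℚ_[p])‖ ≤ ‖(d : ℚ_[p])‖ := by
  obtain ⟨h1, hoff, P, lam, hPD, hineq⟩ := h
  have hconj : frameOp τ = P.conj (Matrix.toLin' (Matrix.diagonal lam)) := by
    rw [hPD]; rfl
  have tr1 : ∑ j, lam j = (n : ℚ_[p]) := by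
    have := pv_trace_frameOp τ
    rw [hconj, LinearMap.trace_conj', pv_trace_toLin', Matrix.trace_diagonal] at this
    simpa [h1] using this
  have hsq : frameOp τ ∘ₗ frameOp τ = P.conj (Matrix.toLin' (Matrix.diagonal (lam * lam))) := by
    rw [hconj, ← LinearEquiv.conj_comp, ← Matrix.toLin'_mul, Matrix.diagonal_mul_diagonal]; rfl
  have tr2 : ∑ j, lam j ^ 2 = ∑ j, ∑ k, pinner (τ j) (τ k) * pinner (τ j) (τ k) := by
    have := pv_trace_frameOp_sq τ
    rw [hsq, LinearMap.trace_conj', pv_trace_toLin', Matrix.trace_diagonal] at this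
    simpa [sq] using this
  have hsplit : ∑ j, ∑ k, pinner (τ j) (τ k) * pinner (τ j) (τ k)
      = (n : ℚ_[p]) + ∑ j : Fin n, ∑ k ∈ Finset.univ.erase j,
          pinner (τ j) (τ k) * pinner (τ j) (τ k) := by
    have : ∀ j : Fin n, ∑ k, pinner (τ j) (τ k) * pinner (τ j) (τ k)
        = 1 + ∑ k ∈ Finset.univ.erase j, pinner (τ j) (τ k) * pinner (τ j) (τ k) := by
      intro j
      rw [← Finset.add_sum_erase _ _ (Finset.mem_univ j), h1 j, one_mul]
    rw [Finset.sum_congr rfl fun j _ => this j, Finset.sum_add_distrib]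
    simp
  have hRle : ‖∑ j : Fin n, ∑ k ∈ Finset.univ.erase j,
      pinner (τ j) (τ k) * pinner (τ j) (τ k)‖ ≤ γ ^ 2 := by
    apply IsUltrametricDist.norm_sum_le_of_forall_le_of_nonneg (sq_nonneg γ)
    intro j _
    apply IsUltrametricDist.norm_sum_le_of_forall_le_of_nonneg (sq_nonneg γ)
    intro k hk
    have hne : j ≠ k := (Finset.ne_of_mem_erase hk).symm
    rw [norm_mul, hoff j k hne, sq]
  have hT : ‖∑ j, lam j ^ 2‖ ≤ ‖(n : ℚ_[p])‖ := by
    rw [tr2, hsplit]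
    refine le_trans (Padic.nonarchimedean _ _) (max_le le_rfl (le_trans hRle hn))
  have key : ‖(n : ℚ_[p])‖ ^ 2 ≤ ‖(d : ℚ_[p])‖ * ‖(n : ℚ_[p])‖ := by
    calc ‖(n : ℚ_[p])‖ ^ 2 = ‖∑ j, lam j‖ ^ 2 := by rw [tr1]
    _ ≤ ‖(d : ℚ_[p])‖ * ‖∑ j, lam j ^ 2‖ := hineq
    _ ≤ ‖(d : ℚ_[p])‖ * ‖(n : ℚ_[p])‖ := mul_le_mul_of_nonneg_left hT (norm_nonneg _)
  rcases eq_or_lt_of_le (norm_nonneg ((n : ℚ_[p]))) with h0 | h0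
  · rw [← h0]; exact norm_nonneg _
  · rw [sq] at key
    exact le_of_mul_le_mul_right key h0


end
end

section
/- Let p be a prime and d a positive natural number. Let τ_1, …, τ_n be vectors in ℚ_p^d such that (i) ⟨τ_j, τ_j⟩ = 1 for all 1 ≤ j ≤ n; (ii) there exist an invertible linear operator P on ℚ_p^d and λ_1, …, λ_d ∈ ℚ_p such that the frame operator S_τ satisfies S_τ = P ∘ D ∘ P⁻¹, where D is the diagonal operator with diagonal entries λ_1, …, λ_d, and |∑_{j=1}^d λ_j|² ≤ |d| · |∑_{j=1}^d λ_j²|. Then |n|² ≤ |d| · max{|n|, max_{1 ≤ j, k ≤ n, j ≠ k} |⟨τ_j, τ_k⟩|²}, where |n| and |d| denote the p-adic absolute values of the integers n and d. -/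
open scoped BigOperators

noncomputable section

variable {p : ℕ} [Fact p.Prime]

lemma trace_smulRight_pi {d : ℕ} (f : (Fin d → ℚ_[p]) →ₗ[ℚ_[p]] ℚ_[p])
    (v : Fin d → ℚ_[p]) :
    LinearMap.trace ℚ_[p] (Fin d → ℚ_[p]) (f.smulRight v) = f v := by
  have h : f.smulRight v = dualTensorHom ℚ_[p] (Fin d → ℚ_[p]) (Fin d → ℚ_[p]) (f ⊗ₜ v) := by
    ext x; simp
  rw [h, LinearMap.trace_eq_contract_apply, contractLeft_apply]

lemma smulRight_comp_smulRight {d : ℕ} (f g : (Fin d → ℚ_[p]) →ₗ[ℚ_[p]] ℚ_[p])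
    (u v : Fin d → ℚ_[p]) :
    (f.smulRight u) ∘ₗ (g.smulRight v) = ((f v) • g).smulRight u := by
  ext x i
  simp [mul_comm, mul_left_comm, mul_assoc]

lemma trace_toLin'' {m : ℕ} (A : Matrix (Fin m) (Fin m) ℚ_[p]) :
    LinearMap.trace ℚ_[p] (Fin m → ℚ_[p]) (Matrix.toLin' A) = Matrix.trace A := by
  rw [LinearMap.trace_eq_matrix_trace ℚ_[p] (Pi.basisFun ℚ_[p] (Fin m)),
    LinearMap.toMatrix_eq_toMatrix', LinearMap.toMatrix'_toLin']

lemma pinner_comm {d : ℕ} (x y : Fin d → ℚ_[p]) : pinner x y = pinner y x := by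
  simp [pinner, mul_comm]

lemma trace_frameOp {d n : ℕ} (τ : Fin n → Fin d → ℚ_[p]) :
    LinearMap.trace ℚ_[p] (Fin d → ℚ_[p]) (frameOp τ) = ∑ j, pinner (τ j) (τ j) := by
  rw [frameOp, map_sum]
  exact Finset.sum_congr rfl fun j _ => trace_smulRight_pi _ _

lemma trace_frameOp_sq {d n : ℕ} (τ : Fin n → Fin d → ℚ_[p]) :
    LinearMap.trace ℚ_[p] (Fin d → ℚ_[p]) (frameOp τ ∘ₗ frameOp τ) =
      ∑ j, ∑ k, pinner (τ j) (τ k) ^ 2 := by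
  rw [frameOp, ← Module.End.mul_eq_comp, Finset.sum_mul_sum, map_sum]
  refine Finset.sum_congr rfl fun j _ => ?_
  rw [map_sum]
  refine Finset.sum_congr rfl fun k _ => ?_
  rw [Module.End.mul_eq_comp, smulRight_comp_smulRight, trace_smulRight_pi]
  show pinnerL (τ j) (τ k) * pinnerL (τ k) (τ j) = _
  show pinner (τ k) (τ j) * pinner (τ j) (τ k) = _
  rw [pinner_comm (τ k), sq]


/-- **General p-adic Welch bound.** -/
theorem general_padic_welch_bound {d n : ℕ} (hd : 0 < d)
    (τ : Fin n → Fin d → ℚ_[p])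
    (h1 : ∀ j, pinner (τ j) (τ j) = 1)
    (h2 : GoodDiagonalizable τ) :
    ‖(n : ℚ_[p])‖ ^ 2 ≤ ‖(d : ℚ_[p])‖ *
      max ‖(n : ℚ_[p])‖
        (sSup {x : ℝ | ∃ j k : Fin n, j ≠ k ∧ x = ‖pinner (τ j) (τ k)‖ ^ 2}) := by
  classical
  obtain ⟨P, lam, hPD, hineq⟩ := h2
  set S : Set ℝ := {x : ℝ | ∃ j k : Fin n, j ≠ k ∧ x = ‖pinner (τ j) (τ k)‖ ^ 2} with hS
  set C : ℝ := max ‖(n : ℚ_[p])‖ (sSup S) with hC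
  have hC0 : (0 : ℝ) ≤ C := le_trans (norm_nonneg _) (le_max_left _ _)
  have hbdd : BddAbove S := by
    refine Set.Finite.bddAbove (Set.Finite.subset
      (Set.finite_range fun jk : Fin n × Fin n => ‖pinner (τ jk.1) (τ jk.2)‖ ^ 2) ?_)
    rintro x ⟨j, k, _, rfl⟩
    exact ⟨(j, k), rfl⟩
  -- frameOp as conjugation
  have hconj : frameOp τ = P.conj (Matrix.toLin' (Matrix.diagonal lam)) := by
    rw [LinearEquiv.conj_apply, hPD, LinearMap.comp_assoc]
  -- trace identities
  have tr1 : ∑ j, lam j = (n : ℚ_[p]) := by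
    have e1 : LinearMap.trace ℚ_[p] (Fin d → ℚ_[p]) (frameOp τ) = ∑ j, lam j := by
      rw [hconj, LinearMap.trace_conj', trace_toLin'', Matrix.trace_diagonal]
    have e2 : LinearMap.trace ℚ_[p] (Fin d → ℚ_[p]) (frameOp τ) = (n : ℚ_[p]) := by
      rw [trace_frameOp]
      simp [h1]
    rw [← e1, e2]
  have tr2 : ∑ j, lam j ^ 2 = ∑ j, ∑ k, pinner (τ j) (τ k) ^ 2 := by
    have hsq : frameOp τ ∘ₗ frameOp τ =
        P.conj (Matrix.toLin' (Matrix.diagonal (lam * lam))) := by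
      rw [hconj, ← LinearEquiv.conj_comp]
      congr 1
      rw [← Matrix.toLin'_mul, Matrix.diagonal_mul_diagonal]
      rfl
    have e1 : LinearMap.trace ℚ_[p] (Fin d → ℚ_[p]) (frameOp τ ∘ₗ frameOp τ) =
        ∑ j, lam j * lam j := by
      rw [hsq, LinearMap.trace_conj', trace_toLin'', Matrix.trace_diagonal]
      rfl
    have e2 : ∑ j, lam j ^ 2 = ∑ j, lam j * lam j := by simp [pow_two]
    rw [e2, ← e1, trace_frameOp_sq]
  -- norm bound on the double sum
  have hsplit : ∑ j, ∑ k, pinner (τ j) (τ k) ^ 2 =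
      (n : ℚ_[p]) + ∑ j, ∑ k ∈ Finset.univ.erase j, pinner (τ j) (τ k) ^ 2 := by
    have : ∀ j : Fin n, ∑ k, pinner (τ j) (τ k) ^ 2 =
        1 + ∑ k ∈ Finset.univ.erase j, pinner (τ j) (τ k) ^ 2 := by
      intro j
      rw [← Finset.sum_erase_add _ _ (Finset.mem_univ j), h1 j, one_pow, add_comm]
    rw [Finset.sum_congr rfl fun j _ => this j, Finset.sum_add_distrib]
    simp
  have hE : ‖∑ j, ∑ k ∈ Finset.univ.erase j, pinner (τ j) (τ k) ^ 2‖ ≤ C := by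
    refine IsUltrametricDist.norm_sum_le_of_forall_le_of_nonneg hC0 fun j _ => ?_
    refine IsUltrametricDist.norm_sum_le_of_forall_le_of_nonneg hC0 fun k hk => ?_
    have hjk : j ≠ k := (Finset.ne_of_mem_erase hk).symm
    have hmem : ‖pinner (τ j) (τ k)‖ ^ 2 ∈ S := ⟨j, k, hjk, rfl⟩
    calc ‖pinner (τ j) (τ k) ^ 2‖ = ‖pinner (τ j) (τ k)‖ ^ 2 := norm_pow _ _
      _ ≤ sSup S := le_csSup hbdd hmem
      _ ≤ C := le_max_right _ _
  have hsum : ‖∑ j, ∑ k, pinner (τ j) (τ k) ^ 2‖ ≤ C := by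
    rw [hsplit]
    refine le_trans (Padic.nonarchimedean _ _) (max_le (le_max_left _ _) hE)
  calc ‖(n : ℚ_[p])‖ ^ 2 = ‖∑ j, lam j‖ ^ 2 := by rw [tr1]
    _ ≤ ‖(d : ℚ_[p])‖ * ‖∑ j, lam j ^ 2‖ := hineq
    _ = ‖(d : ℚ_[p])‖ * ‖∑ j, ∑ k, pinner (τ j) (τ k) ^ 2‖ := by rw [tr2]
    _ ≤ ‖(d : ℚ_[p])‖ * C := mul_le_mul_of_nonneg_left hsum (norm_nonneg _)

end
end

section
/- Let p be a prime, d a positive natural number, γ ≥ 0 a real number, and a ∈ ℚ_p nonzero. If τ_1, …, τ_n is a collection of p-adic (γ, a)-equiangular lines in ℚ_p^d and |a²·n| ≥ γ², then |n| ≤ |d|, where |n| and |d| denote the p-adic absolute values of the integers n and d and |a²·n| denotes the p-adic absolute value of a² times n. -/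
open scoped BigOperators

noncomputable section

variable {p : ℕ} [Fact p.Prime]

/-!
The trace of the frame operator `S` and of `S²` can be computed in two ways. Through the
diagonalisation they are `∑ λⱼ` and `∑ λⱼ²`; writing `S = AᵀA` with `A` the matrix of rows `τⱼ`,
they equal the traces of the Gram matrix `G = AAᵀ` and of `G²`, i.e. `n a` and
`∑ⱼ ∑ₖ ⟨τⱼ, τₖ⟩²`. In the latter sum the diagonal contributes `n a²` and every off-diagonal term
has absolute value `γ² ≤ |a² n|`, so by the ultrametric inequality `|∑ λⱼ²| ≤ |a² n|`. The
hypothesis on the `λⱼ` then gives `|n|² |a|² ≤ |d| |a|² |n|`.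
-/

lemma trace_pow_conj_toLin'_diagonal {R ι : Type*} [CommRing R] [Fintype ι] [DecidableEq ι]
    (P : (ι → R) ≃ₗ[R] (ι → R)) (lam : ι → R) (k : ℕ) :
    LinearMap.trace R _
        ((P.toLinearMap ∘ₗ Matrix.toLin' (Matrix.diagonal lam) ∘ₗ P.symm.toLinearMap) ^ k) =
      ∑ i, lam i ^ k := by
  change LinearMap.trace R _ (P.conjAlgEquiv R (Matrix.toLin' _) ^ k) = _
  rw [← map_pow, ← Matrix.toLin'_pow, Matrix.diagonal_pow, LinearEquiv.conjAlgEquiv_apply,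
    LinearMap.trace_comp_comm', LinearMap.comp_assoc, P.symm_comp, LinearMap.comp_id,
    Matrix.trace_toLin'_eq, Matrix.trace_diagonal]
  rfl

lemma Matrix.trace_mul_pow_succ_comm {R m n : Type*} [CommRing R] [Fintype m] [Fintype n]
    [DecidableEq m] [DecidableEq n] (A : Matrix m n R) (B : Matrix n m R) (k : ℕ) :
    ((B * A) ^ (k + 1)).trace = ((A * B) ^ (k + 1)).trace := by
  have hpow : (B * A) ^ (k + 1) = B * ((A * B) ^ k * A) := by
    induction k with
    | zero => simp
    | succ k ih => rw [pow_succ, ih, pow_succ]; simp only [Matrix.mul_assoc]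
  rw [hpow, Matrix.trace_mul_comm, Matrix.mul_assoc, ← pow_succ]

section Frame

open Matrix

variable {d n : ℕ}

def pgram (τ : Fin n → Fin d → ℚ_[p]) : Matrix (Fin n) (Fin n) ℚ_[p] :=
  of fun j k => pinner (τ j) (τ k)

lemma pgram_apply (τ : Fin n → Fin d → ℚ_[p]) (j k : Fin n) :
    pgram τ j k = pinner (τ j) (τ k) := rfl

lemma frameOp_eq_toLin' (τ : Fin n → Fin d → ℚ_[p]) :
    frameOp τ = toLin' ((of τ)ᵀ * of τ) := by
  refine LinearMap.ext fun x => funext fun i => ?_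
  simp only [frameOp, pinnerL, pinner, LinearMap.coe_sum, Finset.sum_apply,
    LinearMap.smulRight_apply, LinearMap.coe_mk, AddHom.coe_mk, Pi.smul_apply, smul_eq_mul,
    toLin'_apply, mulVec, dotProduct, mul_apply, transpose_apply, of_apply, Finset.sum_mul]
  rw [Finset.sum_comm]
  exact Finset.sum_congr rfl fun j _ => Finset.sum_congr rfl fun l _ => by ring

lemma trace_frameOp_pow_succ (τ : Fin n → Fin d → ℚ_[p]) (k : ℕ) :
    LinearMap.trace ℚ_[p] _ (frameOp τ ^ (k + 1)) = (pgram τ ^ (k + 1)).trace := by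
  have hgram : of τ * (of τ)ᵀ = pgram τ := by
    ext j k; simp [mul_apply, pgram_apply, pinner]
  rw [frameOp_eq_toLin', ← toLin'_pow, trace_toLin'_eq, trace_mul_pow_succ_comm, hgram]

end Frame

lemma norm_trace_sq_le {K ι : Type*} [SeminormedRing K] [IsUltrametricDist K] [Fintype ι]
    [DecidableEq ι] (G : Matrix ι ι K) {C : ℝ} (hdiag : ‖∑ i, G i i ^ 2‖ ≤ C)
    (hoff : ∀ i j, i ≠ j → ‖G i j * G j i‖ ≤ C) : ‖(G ^ 2).trace‖ ≤ C := by
  have hC : 0 ≤ C := (norm_nonneg _).trans hdiag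
  have hsplit : (G ^ 2).trace =
      ∑ i, G i i ^ 2 + ∑ i, ∑ j ∈ Finset.univ.erase i, G i j * G j i := by
    simp only [Matrix.trace, Matrix.diag, sq, Matrix.mul_apply, ← Finset.sum_add_distrib]
    exact Finset.sum_congr rfl fun i _ => (Finset.add_sum_erase _ _ (Finset.mem_univ i)).symm
  rw [hsplit]
  refine (IsUltrametricDist.norm_add_le_max _ _).trans (max_le hdiag ?_)
  exact IsUltrametricDist.norm_sum_le_of_forall_le_of_nonneg hC fun i _ =>
    IsUltrametricDist.norm_sum_le_of_forall_le_of_nonneg hC fun j hj =>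
      hoff i j (Finset.ne_of_mem_erase hj).symm

lemma norm_le_of_norm_mul_sq_le {K : Type*} [NormedField K] {x y a : K} (ha : a ≠ 0)
    (h : ‖x * a‖ ^ 2 ≤ ‖y‖ * ‖a ^ 2 * x‖) : ‖x‖ ≤ ‖y‖ := by
  rcases eq_or_ne x 0 with rfl | hx
  · simp
  have hpos : 0 < ‖a‖ ^ 2 * ‖x‖ := by positivity
  rw [norm_mul, norm_mul, norm_pow] at h
  exact le_of_mul_le_mul_right (by linarith) hpos

theorem padic_vanLintSeidel_case_large_a_general {d n : ℕ}
    (γ : ℝ) (a : ℚ_[p]) (ha : a ≠ 0) (τ : Fin n → Fin d → ℚ_[p])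
    (h : IsPadicEquiangularA γ a τ) (hn : γ ^ 2 ≤ ‖a ^ 2 * (n : ℚ_[p])‖) :
    ‖(n : ℚ_[p])‖ ≤ ‖(d : ℚ_[p])‖ := by
  obtain ⟨hself, hcross, P, lam, hS, hlam⟩ := h
  have htrace (k : ℕ) : ∑ j, lam j ^ (k + 1) = (pgram τ ^ (k + 1)).trace := by
    rw [← trace_pow_conj_toLin'_diagonal P, ← hS, trace_frameOp_pow_succ]
  have hsum : ∑ j, lam j = n * a := by
    simpa [Matrix.trace, pgram_apply, hself] using htrace 0
  have hsq : ‖∑ j, lam j ^ 2‖ ≤ ‖a ^ 2 * (n : ℚ_[p])‖ := by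
    rw [htrace 1]
    refine norm_trace_sq_le _ (le_of_eq ?_) fun j k hjk => ?_
    · simp [pgram_apply, hself, mul_comm]
    · rw [norm_mul, pgram_apply, pgram_apply, hcross j k hjk, hcross k j hjk.symm, ← sq]
      exact hn
  refine norm_le_of_norm_mul_sq_le ha ?_
  rw [← hsum]
  exact hlam.trans (mul_le_mul_of_nonneg_left hsq (norm_nonneg _))

theorem padic_vanLintSeidel_case_large_a {d n : ℕ} (hd : 0 < d)
    (γ : ℝ) (hγ : 0 ≤ γ) (a : ℚ_[p]) (ha : a ≠ 0) (τ : Fin n → Fin d → ℚ_[p])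
    (h : IsPadicEquiangularA γ a τ) (hn : γ ^ 2 ≤ ‖a ^ 2 * (n : ℚ_[p])‖) :
    ‖(n : ℚ_[p])‖ ≤ ‖(d : ℚ_[p])‖ :=
  padic_vanLintSeidel_case_large_a_general γ a ha τ h hn

end
end
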